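/- arXiv:1112.1469 — 2 statements merged into one kernel-verified Lean document; each statement's English description precedes it below -/
import Mathlib

section
/- Let X be a finite nonempty index set and m, n ≥ 1. For each i ∈ X let ρ_i be a density matrix on Fin m and let P_i be a positive semidefinite matrix on Fin n, with ∑_{i ∈ X} P_i = I_n, and set C = ∑_{i ∈ X} ρ_i ⊗ P_iᵀ. Then there exists a density matrix ρ₀ on Fin m such that (ρ₀ ⊗ I_n) − (1/m)·C is positive semidefinite. (Hence every measure-and-prepare channel with m-dimensional output can be simulated from the future to the past with probability at least 1/m.) -/
open Matrix
open scoped Kronecker ComplexOrder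

/-!
Take ρ₀ = I/m. Since each ρᵢ is positive semidefinite with trace 1, all its eigenvalues lie
in [0, 1], so ρᵢ ≤ I. As the Pᵢᵀ are positive semidefinite and sum to I,
I ⊗ I - C = ∑ᵢ (I - ρᵢ) ⊗ Pᵢᵀ is a sum of Kronecker products of positive semidefinite
matrices, hence positive semidefinite; dividing by m gives the claim.
-/

namespace Matrix

section Kronecker

variable {α : Type*} {l m n p ι : Type*}

theorem kronecker_sum [CommSemiring α] (A : Matrix l m α) (B : ι → Matrix n p α)
    (s : Finset ι) : A ⊗ₖ (∑ i ∈ s, B i) = ∑ i ∈ s, A ⊗ₖ B i :=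
  map_sum (kroneckerBilinear (R := α) A) B s

theorem sub_kronecker [CommRing α] (A B : Matrix l m α) (C : Matrix n p α) :
    (A - B) ⊗ₖ C = A ⊗ₖ C - B ⊗ₖ C :=
  LinearMap.map_sub₂ (kroneckerBilinear (R := α)) A B C

end Kronecker

open scoped MatrixOrder

variable {𝕜 : Type*} [RCLike 𝕜]

theorem PosSemidef.le_trace_smul_one {n : Type*} [Fintype n] [DecidableEq n]
    {A : Matrix n n 𝕜} (hA : A.PosSemidef) : A ≤ A.trace • 1 := by
  have hle : A ≤ algebraMap ℝ (Matrix n n 𝕜) (∑ i, hA.1.eigenvalues i) := by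
    refine le_algebraMap_of_spectrum_le (fun x hx => ?_) hA.1
    obtain ⟨i, rfl⟩ := hA.1.spectrum_real_eq_range_eigenvalues ▸ hx
    exact Finset.single_le_sum (fun j _ => hA.eigenvalues_nonneg j) (Finset.mem_univ i)
  convert hle using 1
  rw [hA.1.trace_eq_sum_eigenvalues, Algebra.algebraMap_eq_smul_one]
  simp [RCLike.real_smul_eq_coe_smul (K := 𝕜)]

theorem sum_kronecker_le_one {ι m n : Type*} [Fintype ι] [Fintype m] [DecidableEq m]
    [Fintype n] [DecidableEq n] {ρ : ι → Matrix m m 𝕜} (hρ : ∀ i, (ρ i).PosSemidef)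
    (hρtr : ∀ i, (ρ i).trace = 1) {Q : ι → Matrix n n 𝕜} (hQ : ∀ i, (Q i).PosSemidef)
    (hQsum : ∑ i, Q i = 1) : ∑ i, ρ i ⊗ₖ Q i ≤ 1 := by
  have hρ_le_one : ∀ i, ρ i ≤ 1 := fun i => by
    simpa [hρtr i] using (hρ i).le_trace_smul_one
  have hsplit : (1 : Matrix (m × n) (m × n) 𝕜) - ∑ i, ρ i ⊗ₖ Q i
      = ∑ i, (1 - ρ i) ⊗ₖ Q i := by
    simp only [sub_kronecker, Finset.sum_sub_distrib, ← kronecker_sum, hQsum, one_kronecker_one]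
  rw [le_iff, hsplit]
  exact posSemidef_sum _ fun i _ => (le_iff.mp (hρ_le_one i)).kronecker (hQ i)

end Matrix

theorem measure_prepare_sim_lower_bound_general (X : Type) [Fintype X]
    (m n : ℕ) (hm : 1 ≤ m)
    (ρ : X → Matrix (Fin m) (Fin m) ℂ)
    (hρ : ∀ i, (ρ i).PosSemidef) (hρtr : ∀ i, (ρ i).trace = 1)
    (P : X → Matrix (Fin n) (Fin n) ℂ)
    (hP : ∀ i, (P i).PosSemidef) (hPsum : ∑ i, P i = 1) :
    ∃ ρ₀ : Matrix (Fin m) (Fin m) ℂ, ρ₀.PosSemidef ∧ ρ₀.trace = 1 ∧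
      (ρ₀ ⊗ₖ (1 : Matrix (Fin n) (Fin n) ℂ) -
        ((1 : ℂ) / m) • ∑ i, ρ i ⊗ₖ (P i)ᵀ).PosSemidef := by
  have hm0 : (m : ℂ) ≠ 0 := Nat.cast_ne_zero.mpr (by omega)
  have hc : (0 : ℂ) ≤ 1 / m := div_nonneg zero_le_one (Nat.cast_nonneg m)
  have hPTsum : ∑ i, (P i)ᵀ = 1 := by rw [← transpose_sum, hPsum, transpose_one]
  have hC_le_one := sum_kronecker_le_one hρ hρtr (fun i => (hP i).transpose) hPTsum
  refine ⟨(1 / m : ℂ) • 1, PosSemidef.one.smul hc, ?_, ?_⟩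
  · simp [trace_smul, hm0]
  · rw [smul_kronecker, one_kronecker_one, ← smul_sub]
    exact (le_iff.mp hC_le_one).smul hc

/-- Every measure-and-prepare channel with m-dimensional output can be simulated from the
future to the past with probability at least 1/m. -/
theorem measure_prepare_sim_lower_bound (X : Type) [Fintype X] [Nonempty X]
    (m n : ℕ) (hm : 1 ≤ m) (hn : 1 ≤ n)
    (ρ : X → Matrix (Fin m) (Fin m) ℂ)
    (hρ : ∀ i, (ρ i).PosSemidef) (hρtr : ∀ i, (ρ i).trace = 1)
    (P : X → Matrix (Fin n) (Fin n) ℂ)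
    (hP : ∀ i, (P i).PosSemidef) (hPsum : ∑ i, P i = 1) :
    ∃ ρ₀ : Matrix (Fin m) (Fin m) ℂ, ρ₀.PosSemidef ∧ ρ₀.trace = 1 ∧
      (ρ₀ ⊗ₖ (1 : Matrix (Fin n) (Fin n) ℂ) -
        ((1 : ℂ) / m) • ∑ i, ρ i ⊗ₖ (P i)ᵀ).PosSemidef :=
  measure_prepare_sim_lower_bound_general X m n hm ρ hρ hρtr P hP hPsum
end

section
/- Let d ≥ 1 and 1 ≤ M ≤ N. Index the k-fold tensor power of ℂ^d by functions Fin k → Fin d, let P₊^{(k)} be the symmetrizer and d₊^{(k)} := C(d+k−1,k). Identify Fin N with the juxtaposition of Fin M and Fin (N−M). Let K be the matrix indexed by ((Fin M → Fin d) × (Fin N → Fin d)) with entry K ((f,g),(f',g')) equal to P₊^{(N−M)} (tail of g, tail of g') if f coincides with the restriction of g to the first M factors and f' coincides with the restriction of g' to the first M factors, and 0 otherwise, and define C⁺ := (P₊^{(M)} ⊗ P₊^{(N)}) · K · (P₊^{(M)} ⊗ P₊^{(N)}) (the Choi matrix of the symmetric partial trace channel from N to M copies). Then C⁺ · C⁺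 = (d₊^{(N)}/d₊^{(N−M)}) · C⁺; that is, C⁺ is d₊^{(N)}/d₊^{(N−M)} times an orthogonal projection, so its only nonzero eigenvalue is d₊^{(N)}/d₊^{(N−M)}. -/
open Matrix
open scoped Kronecker ComplexOrder

/-- The permutation matrix on the k-fold tensor power of ℂ^d associated to a
permutation π of the tensor factors. -/
noncomputable def permMat (d k : ℕ) (π : Equiv.Perm (Fin k)) :
    Matrix (Fin k → Fin d) (Fin k → Fin d) ℂ :=
  Matrix.of fun f g => if g = f ∘ π then 1 else 0

/-- The symmetrizer: the orthogonal projection onto the symmetric subspace of the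
k-fold tensor power of ℂ^d. -/
noncomputable def symProj (d k : ℕ) : Matrix (Fin k → Fin d) (Fin k → Fin d) ℂ :=
  (1 / (Nat.factorial k : ℂ)) • ∑ π : Equiv.Perm (Fin k), permMat d k π

/-- Restriction of g : Fin N → Fin d to the first M tensor factors. -/
def headM (d M N : ℕ) (hMN : M ≤ N) (g : Fin N → Fin d) : Fin M → Fin d :=
  fun i => g ⟨i, lt_of_lt_of_le i.isLt hMN⟩

/-- Restriction of g : Fin N → Fin d to the last N - M tensor factors. -/
def tailM (d M N : ℕ) (hMN : M ≤ N) (g : Fin N → Fin d) : Fin (N - M) → Fin d :=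
  fun i => g ⟨M + i, by have := i.isLt; omega⟩

/-- The matrix K = |I^{⊗M}⟩⟩⟨⟨I^{⊗M}| ⊗ P₊^{(N-M)} between the M output systems,
the first M input systems, and the remaining N-M input systems. -/
noncomputable def Kmat (d M N : ℕ) (hMN : M ≤ N) :
    Matrix ((Fin M → Fin d) × (Fin N → Fin d)) ((Fin M → Fin d) × (Fin N → Fin d)) ℂ :=
  Matrix.of fun p q =>
    if p.1 = headM d M N hMN p.2 ∧ q.1 = headM d M N hMN q.2 then
      symProj d (N - M) (tailM d M N hMN p.2) (tailM d M N hMN q.2)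
    else 0

/-- The Choi matrix of the symmetric partial trace channel from N to M ≤ N copies. -/
noncomputable def Cplus (d M N : ℕ) (hMN : M ≤ N) :
    Matrix ((Fin M → Fin d) × (Fin N → Fin d)) ((Fin M → Fin d) × (Fin N → Fin d)) ℂ :=
  (symProj d M ⊗ₖ symProj d N) * Kmat d M N hMN * (symProj d M ⊗ₖ symProj d N)

/-!
Write `Kmat = E P₊^{(N-M)} Eᵀ` with `E = |I^{⊗M}⟩⟩ ⊗ 𝟙`. Since `Q = P₊^{(M)} ⊗ P₊^{(N)}` is
idempotent, `C⁺ C⁺ = Q (K Q K) Q`, and it suffices to show `Eᵀ Q E = c P₊^{(N-M)}` with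
`c = d₊^{(N)} / d₊^{(N-M)}`. As `P₊^{(N)}` absorbs permutations of the first `M` factors, the
factor `P₊^{(M)}` drops out of `Eᵀ Q E`, leaving the partial trace of `P₊^{(N)}` over the first
`M` factors.

The entries of `k! P₊^{(k)}` count permutations. Tracing out one factor of `P₊^{(n+1)}`
multiplies these counts by `d + n`: a permutation of `n + 1` points is an image `p` of the traced
point (which must carry the traced value: `d` choices for `p = 0`, one for each other `p`) and a
permutation of the remaining `n` points. Hence
`Tr_M P₊^{(N)} = (d+N-M)⋯(d+N-1) · (N-M)!/N! · P₊^{(N-M)} = c P₊^{(N-M)}`.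
-/

open Finset

theorem comp_swap_eq_self {α β : Type*} [DecidableEq α] {f : α → β} {a b : α} (h : f a = f b) :
    f ∘ Equiv.swap a b = f := by
  rw [Equiv.comp_swap_eq_update, h, Function.update_eq_self, ← h, Function.update_eq_self]

theorem Fin.append_comp_perm_left {α : Type*} {m n : ℕ} (a : Fin m → α) (t : Fin n → α)
    (τ : Equiv.Perm (Fin m)) :
    Fin.append (a ∘ τ) t =
      Fin.append a t ∘ finSumFinEquiv.permCongr (τ.sumCongr (Equiv.refl (Fin n))) := by
  funext y
  refine Fin.addCases (fun i => ?_) (fun j => ?_) y <;> simp [Equiv.permCongr_apply]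

section PermCount

variable {γ γ' X : Type*} [Fintype γ] [DecidableEq γ] [Fintype γ'] [DecidableEq γ']
  [DecidableEq X]

def permCount (f g : γ → X) : ℕ :=
  #{σ : Equiv.Perm γ | g = f ∘ σ}

theorem permCount_comp_equiv (e : γ' ≃ γ) (f g : γ → X) :
    permCount (f ∘ e) (g ∘ e) = permCount f g := by
  refine Finset.card_equiv (e.permCongr) fun σ => ?_
  simp only [mem_filter, mem_univ, true_and]
  constructor
  · intro h; funext x; simpa using congrFun h (e.symm x)
  · intro h; funext x; simpa using congrFun h (e x)

theorem permCount_comp_perm_right (π : Equiv.Perm γ) (f g : γ → X) :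
    permCount f (g ∘ π) = permCount f g := by
  refine Finset.card_equiv (Equiv.mulRight π⁻¹) fun σ => ?_
  simp only [mem_filter, mem_univ, true_and, Equiv.coe_mulRight, Equiv.Perm.coe_mul]
  constructor
  · intro h; funext x; simpa using congrFun h (π⁻¹ x)
  · intro h; funext x; simpa using congrFun h (π x)

theorem permCount_comp_cast {m n : ℕ} (h : m = n) (f g : Fin n → X) :
    permCount (f ∘ Fin.cast h) (g ∘ Fin.cast h) = permCount f g :=
  permCount_comp_equiv (finCongr h) f g

end PermCount

theorem cons_eq_cons_comp_decomposeFin_symm_iff {X : Type*} {n : ℕ} (b : X) (u u' : Fin n → X)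
    (p : Fin (n + 1)) (τ : Equiv.Perm (Fin n)) :
    (Fin.cons b u' : Fin (n + 1) → X) = Fin.cons b u ∘ Equiv.Perm.decomposeFin.symm (p, τ) ↔
      (Fin.cons b u : Fin (n + 1) → X) p = b ∧ u' = u ∘ τ := by
  set v : Fin (n + 1) → X := Fin.cons b u
  have hswap : v p = b → ∀ y, v (Equiv.swap 0 p y) = v y := fun hp y =>
    congrFun (comp_swap_eq_self (f := v) (by rw [hp]; rfl)) y
  constructor
  · intro h
    have hp : v p = b := by simpa using (congrFun h 0).symm
    refine ⟨hp, funext fun x => ?_⟩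
    simpa [hswap hp, v] using congrFun h x.succ
  · rintro ⟨hp, rfl⟩
    funext x
    cases x using Fin.cases with
    | zero => simpa using hp.symm
    | succ x => simp [hswap hp, v]

section Counting

variable {X : Type*} [Fintype X] [DecidableEq X]

theorem sum_permCount_cons {n : ℕ} (u u' : Fin n → X) :
    ∑ b : X, permCount (Fin.cons b u : Fin (n + 1) → X) (Fin.cons b u') =
      (Fintype.card X + n) * permCount u u' := by
  have hcount : ∀ b : X, permCount (Fin.cons b u : Fin (n + 1) → X) (Fin.cons b u') =
      (∑ p : Fin (n + 1), if (Fin.cons b u : Fin (n + 1) → X) p = b then 1 else 0) *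
        permCount u u' := by
    intro b
    simp only [permCount, card_filter]
    rw [← Equiv.Perm.decomposeFin.symm.sum_comp, Fintype.sum_prod_type, sum_mul_sum]
    simp only [cons_eq_cons_comp_decomposeFin_symm_iff, ite_and, ite_mul, one_mul, zero_mul]
  simp only [hcount, ← sum_mul, Fin.sum_univ_succ, Fin.cons_zero, Fin.cons_succ, if_true,
    sum_add_distrib, sum_comm (γ := X), sum_ite_eq, mem_univ]
  simp only [sum_const, card_univ, Fintype.card_fin, smul_eq_mul, mul_one]

theorem sum_permCount_append {n : ℕ} (t t' : Fin n → X) (m : ℕ) :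
    ∑ a : Fin m → X, permCount (Fin.append a t) (Fin.append a t') =
      (Fintype.card X + n).ascFactorial m * permCount t t' := by
  induction m with
  | zero =>
    simp [Fin.append_left_nil _ _ rfl, permCount_comp_cast]
  | succ m ih =>
    rw [← (Fin.consEquiv fun _ => X).sum_comp, Fintype.sum_prod_type, sum_comm]
    change ∑ a, ∑ b, permCount (Fin.append (Fin.cons b a) t) (Fin.append (Fin.cons b a) t') = _
    simp only [Fin.append_cons, permCount_comp_cast, sum_permCount_cons,
      ← mul_sum, ih, Nat.ascFactorial_succ]
    ring

end Counting

theorem choose_div_choose_eq {d M N : ℕ} (hd : 0 < d) (hMN : M ≤ N) :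
    ((d + N - 1).choose N : ℂ) / (d + (N - M) - 1).choose (N - M) =
      (d + (N - M)).ascFactorial M * (N - M).factorial / N.factorial := by
  obtain ⟨n, rfl⟩ : ∃ n, N = n + M := ⟨N - M, by omega⟩
  rw [Nat.add_sub_cancel]
  have hc₁ := Nat.ascFactorial_eq_factorial_mul_choose' d (n + M)
  have hc₂ := Nat.ascFactorial_eq_factorial_mul_choose' d n
  have hsplit := Nat.ascFactorial_mul_ascFactorial d n M
  have hpos : 0 < d.ascFactorial n := by
    obtain ⟨d, rfl⟩ : ∃ d', d = d' + 1 := ⟨d - 1, by omega⟩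
    exact Nat.ascFactorial_pos d n
  have hc₂pos : (d + n - 1).choose n ≠ 0 := fun h => hpos.ne' (by rw [hc₂, h, mul_zero])
  have key : (d + (n + M) - 1).choose (n + M) * (n + M).factorial =
      (d + n).ascFactorial M * n.factorial * (d + n - 1).choose n :=
    calc _ = d.ascFactorial (n + M) := by rw [hc₁, mul_comm]
      _ = d.ascFactorial n * (d + n).ascFactorial M := hsplit.symm
      _ = _ := by rw [hc₂]; ring
  rw [div_eq_div_iff (by exact_mod_cast hc₂pos) (by positivity)]
  exact_mod_cast key

section Symmetrizer

variable (d k : ℕ)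

theorem permMat_mul (π τ : Equiv.Perm (Fin k)) :
    permMat d k π * permMat d k τ = permMat d k (π * τ) := by
  ext f h
  simp only [mul_apply, permMat, of_apply, ite_mul, one_mul, zero_mul, sum_ite_eq', mem_univ,
    if_true]
  congr 1

theorem symProj_mul_permMat (τ : Equiv.Perm (Fin k)) :
    symProj d k * permMat d k τ = symProj d k := by
  simp only [symProj, smul_mul, sum_mul, permMat_mul]
  congr 1
  exact Equiv.sum_comp (Equiv.mulRight τ) fun π => permMat d k π

theorem symProj_mul_self : symProj d k * symProj d k = symProj d k := by
  nth_rewrite 2 [symProj]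
  simp only [Matrix.mul_smul, Matrix.mul_sum, symProj_mul_permMat, sum_const, card_univ,
    Fintype.card_perm, Fintype.card_fin, ← Nat.cast_smul_eq_nsmul ℂ, smul_smul]
  rw [one_div_mul_cancel (Nat.cast_ne_zero.mpr k.factorial_ne_zero), one_smul]

variable {d k}

theorem symProj_apply (f g : Fin k → Fin d) :
    symProj d k f g = permCount f g / k.factorial := by
  simp [symProj, permMat, Matrix.sum_apply, permCount, div_eq_inv_mul]

theorem symProj_apply_comp_perm (π : Equiv.Perm (Fin k)) (f g : Fin k → Fin d) :
    symProj d k f (g ∘ π) = symProj d k f g := by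
  rw [symProj_apply, symProj_apply, permCount_comp_perm_right]

end Symmetrizer

section Glue

variable {d M N : ℕ} (hMN : M ≤ N)

def glue {α : Type*} (a : Fin M → α) (t : Fin (N - M) → α) : Fin N → α :=
  Fin.append a t ∘ Fin.cast (Nat.add_sub_cancel' hMN).symm

theorem headM_glue (a : Fin M → Fin d) (t : Fin (N - M) → Fin d) :
    headM d M N hMN (glue hMN a t) = a :=
  funext fun i => Fin.append_left a t i

theorem tailM_glue (a : Fin M → Fin d) (t : Fin (N - M) → Fin d) :
    tailM d M N hMN (glue hMN a t) = t :=
  funext fun i => Fin.append_right a t i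

theorem glue_headM_tailM (g : Fin N → Fin d) :
    glue hMN (headM d M N hMN g) (tailM d M N hMN g) = g := by
  have h := Nat.add_sub_cancel' hMN
  calc glue hMN (headM d M N hMN g) (tailM d M N hMN g)
      = Fin.append (fun i => (g ∘ Fin.cast h) (Fin.castAdd _ i))
          (fun i => (g ∘ Fin.cast h) (Fin.natAdd M i)) ∘ Fin.cast h.symm := rfl
    _ = g := by rw [Fin.append_castAdd_natAdd]; funext x; simp

theorem eq_glue_iff {g : Fin N → Fin d} {a : Fin M → Fin d} {t : Fin (N - M) → Fin d} :
    g = glue hMN a t ↔ a = headM d M N hMN g ∧ t = tailM d M N hMN g := by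
  constructor
  · rintro rfl
    exact ⟨(headM_glue hMN a t).symm, (tailM_glue hMN a t).symm⟩
  · rintro ⟨rfl, rfl⟩
    exact (glue_headM_tailM hMN g).symm

theorem exists_perm_glue_comp_left {α : Type*} (τ : Equiv.Perm (Fin M)) (a : Fin M → α)
    (t : Fin (N - M) → α) : ∃ π : Equiv.Perm (Fin N), glue hMN (a ∘ τ) t = glue hMN a t ∘ π :=
  ⟨(finCongr (Nat.add_sub_cancel' hMN)).permCongr
      (finSumFinEquiv.permCongr (τ.sumCongr (Equiv.refl _))), by
    simp only [glue, Fin.append_comp_perm_left]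
    funext x
    simp [Equiv.permCongr_apply]⟩

end Glue

section ChoiMatrix

variable {d M N : ℕ} (hMN : M ≤ N)

/-- `E = |I^{⊗M}⟩⟩ ⊗ 𝟙`: column `t` is `∑ₐ |a⟩ ⊗ |a t⟩`. -/
noncomputable def maxEntEmbedding (d M N : ℕ) (hMN : M ≤ N) :
    Matrix ((Fin M → Fin d) × (Fin N → Fin d)) (Fin (N - M) → Fin d) ℂ :=
  of fun p t => if p.2 = glue hMN p.1 t then 1 else 0

theorem Kmat_eq_mul :
    Kmat d M N hMN =
      maxEntEmbedding d M N hMN * symProj d (N - M) * (maxEntEmbedding d M N hMN)ᵀ := by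
  ext p q
  simp only [Kmat, maxEntEmbedding, of_apply, transpose_apply, mul_apply, eq_glue_iff, ite_and,
    ite_mul, mul_ite, one_mul, mul_one, zero_mul, mul_zero, sum_ite_irrel, sum_ite_eq', mem_univ,
    if_true, sum_const_zero]
  split_ifs <;> rfl

theorem transpose_maxEntEmbedding_mul_mul_apply
    (X : Matrix ((Fin M → Fin d) × (Fin N → Fin d)) ((Fin M → Fin d) × (Fin N → Fin d)) ℂ)
    (s s' : Fin (N - M) → Fin d) :
    ((maxEntEmbedding d M N hMN)ᵀ * X * maxEntEmbedding d M N hMN) s s' =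
      ∑ a, ∑ a', X (a, glue hMN a s) (a', glue hMN a' s') := by
  simp only [maxEntEmbedding, of_apply, transpose_apply, mul_apply, Fintype.sum_prod_type,
    ite_mul, mul_ite, one_mul, mul_one, zero_mul, mul_zero, sum_ite_eq', mem_univ, if_true]
  exact sum_comm

theorem sum_symProj_mul_symProj_glue (a : Fin M → Fin d) (s s' : Fin (N - M) → Fin d) :
    ∑ a', symProj d M a a' * symProj d N (glue hMN a s) (glue hMN a' s') =
      symProj d N (glue hMN a s) (glue hMN a s') := by
  set F := fun a' => symProj d N (glue hMN a s) (glue hMN a' s')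
  have hF : ∀ τ : Equiv.Perm (Fin M), F (a ∘ τ) = F a := fun τ => by
    obtain ⟨π, hπ⟩ := exists_perm_glue_comp_left hMN τ a s'
    simp only [F, hπ, symProj_apply_comp_perm]
  calc ∑ a', symProj d M a a' * F a'
      = (M.factorial : ℂ)⁻¹ * ∑ τ : Equiv.Perm (Fin M), ∑ a', if a' = a ∘ τ then F a' else 0 := by
        simp only [symProj_apply, permCount, card_filter]
        push_cast
        simp only [div_eq_inv_mul, mul_assoc, sum_mul, ite_mul, one_mul, zero_mul, ← mul_sum]
        rw [sum_comm]
    _ = F a := by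
        simp only [sum_ite_eq', mem_univ, if_true, hF, sum_const, card_univ, Fintype.card_perm,
          Fintype.card_fin, nsmul_eq_mul]
        field_simp

theorem sum_symProj_glue (hd : 0 < d) (s s' : Fin (N - M) → Fin d) :
    ∑ a, symProj d N (glue hMN a s) (glue hMN a s') =
      ((d + N - 1).choose N / (d + (N - M) - 1).choose (N - M) : ℂ) * symProj d (N - M) s s' := by
  simp only [symProj_apply, glue, permCount_comp_cast, ← sum_div, ← Nat.cast_sum,
    sum_permCount_append, Fintype.card_fin, choose_div_choose_eq hd hMN]
  push_cast
  field_simp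

theorem transpose_maxEntEmbedding_mul_symProj_kronecker_mul (hd : 0 < d) :
    (maxEntEmbedding d M N hMN)ᵀ * (symProj d M ⊗ₖ symProj d N) * maxEntEmbedding d M N hMN =
      ((d + N - 1).choose N / (d + (N - M) - 1).choose (N - M) : ℂ) • symProj d (N - M) := by
  ext s s'
  simp only [transpose_maxEntEmbedding_mul_mul_apply, kroneckerMap_apply,
    sum_symProj_mul_symProj_glue, sum_symProj_glue hMN hd, Matrix.smul_apply, smul_eq_mul]

theorem Kmat_mul_mul_Kmat (hd : 0 < d) :
    Kmat d M N hMN * (symProj d M ⊗ₖ symProj d N) * Kmat d M N hMN =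
      ((d + N - 1).choose N / (d + (N - M) - 1).choose (N - M) : ℂ) • Kmat d M N hMN := by
  set E := maxEntEmbedding d M N hMN
  set P := symProj d (N - M)
  rw [Kmat_eq_mul]
  calc E * P * Eᵀ * (symProj d M ⊗ₖ symProj d N) * (E * P * Eᵀ)
      = E * (P * (Eᵀ * (symProj d M ⊗ₖ symProj d N) * E) * P) * Eᵀ := by
        simp only [Matrix.mul_assoc]
    _ = _ := by
        rw [transpose_maxEntEmbedding_mul_symProj_kronecker_mul hMN hd, Matrix.mul_smul,
          symProj_mul_self, Matrix.smul_mul, symProj_mul_self, Matrix.mul_smul, Matrix.smul_mul]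

end ChoiMatrix

theorem Cplus_sq_general (d M N : ℕ) (hd : 1 ≤ d) (hMN : M ≤ N) :
    Cplus d M N hMN * Cplus d M N hMN =
      ((Nat.choose (d + N - 1) N : ℂ) / (Nat.choose (d + (N - M) - 1) (N - M) : ℂ)) •
        Cplus d M N hMN := by
  rw [Cplus]
  set Q := symProj d M ⊗ₖ symProj d N
  have hQ : Q * Q = Q := by rw [← mul_kronecker_mul, symProj_mul_self, symProj_mul_self]
  calc Q * Kmat d M N hMN * Q * (Q * Kmat d M N hMN * Q)
      = Q * (Kmat d M N hMN * (Q * Q) * Kmat d M N hMN) * Q := by simp only [Matrix.mul_assoc]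
    _ = _ := by rw [hQ, Kmat_mul_mul_Kmat hMN hd, Matrix.mul_smul, Matrix.smul_mul]

/-- The Choi matrix of the symmetric partial trace channel from N to M copies is
d₊^{(N)}/d₊^{(N-M)} times an orthogonal projection: its only nonzero eigenvalue is
d₊^{(N)}/d₊^{(N-M)}. -/
theorem Cplus_sq (d M N : ℕ) (hd : 1 ≤ d) (hM : 1 ≤ M) (hMN : M ≤ N) :
    Cplus d M N hMN * Cplus d M N hMN =
      ((Nat.choose (d + N - 1) N : ℂ) / (Nat.choose (d + (N - M) - 1) (N - M) : ℂ)) •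
        Cplus d M N hMN :=
  Cplus_sq_general d M N hd hMN
end
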